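/- Any non-steerable two-qubit state satisfies N→(ρ_AB) ≤ √6: if for all projective measurements {Λ_i^a} on A the unnormalized conditional states at B admit a local hidden state decomposition p(a|i) ρ_{B|Λ_i^a} = Σ_λ p_λ p(a|i,λ) σ_B(λ), then Σ_{i,a} p(a|i) C_{M_i}(ρ_{B|Λ_i^a}) ≤ √6 for any MUB triple {M_i} of measurement settings i = 1,2,3. -/

import Mathlib

open ComplexOrder Matrix Kronecker BigOperators

/-- l1-norm coherence of a qubit matrix χ in the basis m. -/
noncomputable def cohIn (m : Fin 2 → Fin 2 → ℂ) (χ : Matrix (Fin 2) (Fin 2) ℂ) : ℝ :=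
  ∑ i, ∑ j, if i ≠ j then ‖star (m i) ⬝ᵥ χ.mulVec (m j)‖ else 0

/-- m is an orthonormal basis of C². -/
def ONB (m : Fin 2 → Fin 2 → ℂ) : Prop :=
  ∀ i j, star (m i) ⬝ᵥ m j = if i = j then (1 : ℂ) else 0

/-- B is a triple of mutually unbiased orthonormal bases of C². -/
def MUBtriple (B : Fin 3 → Fin 2 → Fin 2 → ℂ) : Prop :=
  (∀ i, ONB (B i)) ∧
  ∀ i j, i ≠ j → ∀ a b, ‖star (B i a) ⬝ᵥ B j b‖ ^ 2 = 1 / 2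

/-- Unnormalized conditional state of B after outcome |u⟩⟨u| of a measurement on A:
p(u) ρ_{B|u} = Tr_A[(|u⟩⟨u| ⊗ I) ρ (|u⟩⟨u| ⊗ I)]. -/
noncomputable def condB (ρ : Matrix (Fin 2 × Fin 2) (Fin 2 × Fin 2) ℂ)
    (u : Fin 2 → ℂ) : Matrix (Fin 2) (Fin 2) ℂ :=
  Matrix.of fun b b' => ∑ a, ∑ a', (star (u a)) * ρ (a, b) (a', b') * u a'

/-- Σ_{i,a} p(ρ_{B|Λᵢᵃ}) C_{Mᵢ}(ρ_{B|Λᵢᵃ}), written via unnormalized conditional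
states (using the homogeneity p C(σ/p) = C(σ) of the l1-coherence). -/
noncomputable def naqcSum (ρ : Matrix (Fin 2 × Fin 2) (Fin 2 × Fin 2) ℂ)
    (M Λ : Fin 3 → Fin 2 → Fin 2 → ℂ) : ℝ :=
  ∑ i, ∑ a, cohIn (M i) (condB ρ (Λ i a))

/-- The NAQC functional N→, maximized over MUB triples of coherence bases and of
ensemble-generating measurement bases on A. -/
noncomputable def Nfwd (ρ : Matrix (Fin 2 × Fin 2) (Fin 2 × Fin 2) ℂ) : ℝ :=
  sSup {s : ℝ | ∃ M Λ, MUBtriple M ∧ MUBtriple Λ ∧ s = naqcSum ρ M Λ}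

/-- Partial trace over the first qubit. -/
noncomputable def ptraceA (ρ : Matrix (Fin 2 × Fin 2) (Fin 2 × Fin 2) ℂ) :
    Matrix (Fin 2) (Fin 2) ℂ :=
  Matrix.of fun b b' => ∑ a, ρ (a, b) (a, b')

/-!
Write a qubit state as `σ = (1 + r⃗ ⬝ σ⃗) / 2`. Conjugating by the unitary whose columns are an
orthonormal basis `m` leaves `|r⃗|` unchanged, and the diagonal difference of the conjugated
matrix is `n⃗ₘ ⬝ r⃗`, where `n⃗ₘ` is the Bloch axis of `m`; hence `C_m(σ)² = |r⃗|² - (n⃗ₘ ⬝ r⃗)²`.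
The axes of a MUB triple are orthonormal in `ℝ³` (mutual unbiasedness is exactly
`tr (Aᵢ Aⱼ) = 0` for the observables `Aᵢ = |mᵢ₀⟩⟨mᵢ₀| - |mᵢ₁⟩⟨mᵢ₁|`), so by Parseval
`Σᵢ C_{Mᵢ}(σ)² = 2 |r⃗|² ≤ 2`, and Cauchy–Schwarz gives `Σᵢ C_{Mᵢ}(σ) ≤ √6`.

For a non-steerable state each unnormalized conditional state of `B` is the combination
`Σ_λ p_λ p(a|i,λ) σ_B(λ)`; the l1-coherence is convex and positively homogeneous and
`Σₐ p(a|i,λ) = 1`, so the sum is at most `Σ_λ p_λ Σᵢ C_{Mᵢ}(σ_B(λ)) ≤ √6`.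
-/

open scoped RealInnerProductSpace

lemma Orthonormal.sum_sq_inner_right_eq_norm_sq {ι E : Type*} [Fintype ι] [Nonempty ι]
    [NormedAddCommGroup E] [InnerProductSpace ℝ E] [FiniteDimensional ℝ E] {v : ι → E}
    (hv : Orthonormal ℝ v) (hcard : Fintype.card ι = Module.finrank ℝ E) (x : E) :
    ∑ i, ⟪v i, x⟫ ^ 2 = ‖x‖ ^ 2 := by
  let b := (basisOfOrthonormalOfCardEqFinrank hv hcard).toOrthonormalBasis (by simpa)
  have hb : ⇑b = v := by simp [b]
  rw [← b.sum_sq_inner_right x, hb]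

lemma trace_mul_vecMulVec {n R : Type*} [Fintype n] [CommSemiring R] (X : Matrix n n R)
    (u w : n → R) : (X * vecMulVec u w).trace = w ⬝ᵥ X *ᵥ u := by
  rw [trace_mul_comm, vecMulVec_mul, trace_vecMulVec, dotProduct_comm, ← dotProduct_mulVec]

lemma dotProduct_vecMulVec_mulVec {n R : Type*} [Fintype n] [CommSemiring R]
    (u v w x : n → R) : u ⬝ᵥ vecMulVec v w *ᵥ x = (u ⬝ᵥ v) * (w ⬝ᵥ x) := by
  simp [vecMulVec_mulVec, mul_comm]

/-- Normalized so that a Hermitian `X` equals `(tr X • 1 + Σₖ bₖ • σₖ) / 2`, with `σₖ` the Pauli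
matrices. -/
noncomputable def blochVec (X : Matrix (Fin 2) (Fin 2) ℂ) : EuclideanSpace ℝ (Fin 3) :=
  !₂[2 * (X 0 1).re, -2 * (X 0 1).im, (X 0 0).re - (X 1 1).re]

lemma Matrix.IsHermitian.fin_two_apply {X : Matrix (Fin 2) (Fin 2) ℂ} (hX : X.IsHermitian) :
    X 1 0 = star (X 0 1) ∧ (X 0 0).im = 0 ∧ (X 1 1).im = 0 := by
  refine ⟨(hX.apply 1 0).symm, ?_, ?_⟩ <;> exact Complex.conj_eq_iff_im.mp (hX.apply _ _)

lemma norm_blochVec_sq (X : Matrix (Fin 2) (Fin 2) ℂ) :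
    ‖blochVec X‖ ^ 2 = 4 * ‖X 0 1‖ ^ 2 + ((X 0 0).re - (X 1 1).re) ^ 2 := by
  simp [EuclideanSpace.real_norm_sq_eq, blochVec, Fin.sum_univ_three, Complex.sq_norm,
    Complex.normSq_apply]
  ring

lemma re_trace_mul_eq_inner_blochVec {X Y : Matrix (Fin 2) (Fin 2) ℂ} (hX : X.IsHermitian)
    (hY : Y.IsHermitian) :
    (X * Y).trace.re = (X.trace.re * Y.trace.re + ⟪blochVec X, blochVec Y⟫) / 2 := by
  obtain ⟨hX10, hX00, hX11⟩ := hX.fin_two_apply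
  obtain ⟨hY10, hY00, hY11⟩ := hY.fin_two_apply
  simp [trace, Fin.sum_univ_two, mul_apply, blochVec, hX10, hY10, hX00, hX11, hY00, hY11,
    PiLp.inner_apply, Fin.sum_univ_three]
  ring

lemma norm_blochVec_sq_eq_trace {X : Matrix (Fin 2) (Fin 2) ℂ} (hX : X.IsHermitian) :
    ‖blochVec X‖ ^ 2 = 2 * (X * X).trace.re - X.trace.re ^ 2 := by
  rw [re_trace_mul_eq_inner_blochVec hX hX, real_inner_self_eq_norm_sq]
  ring

lemma norm_blochVec_sq_le_one {σ : Matrix (Fin 2) (Fin 2) ℂ} (hσ : σ.PosSemidef)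
    (htr : σ.trace = 1) : ‖blochVec σ‖ ^ 2 ≤ 1 := by
  obtain ⟨h10, h00, h11⟩ := hσ.1.fin_two_apply
  have hdet : 0 ≤ σ.det.re := (Complex.nonneg_iff.mp hσ.det_nonneg).1
  have htr' : (σ 0 0).re + (σ 1 1).re = 1 := by
    simpa [trace, Fin.sum_univ_two] using congrArg Complex.re htr
  rw [det_fin_two, h10] at hdet
  simp only [RCLike.star_def, Complex.sub_re, Complex.mul_re, h00, h11, mul_zero, sub_zero,
    Complex.conj_re, Complex.conj_im, mul_neg, sub_neg_eq_add, sub_nonneg] at hdet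
  rw [norm_blochVec_sq, Complex.sq_norm, Complex.normSq_apply]
  nlinarith

lemma norm_blochVec_conjTranspose_mul_mul {U X : Matrix (Fin 2) (Fin 2) ℂ} (hU : U * Uᴴ = 1)
    (hX : X.IsHermitian) : ‖blochVec (Uᴴ * X * U)‖ ^ 2 = ‖blochVec X‖ ^ 2 := by
  have hsq : Uᴴ * X * U * (Uᴴ * X * U) = Uᴴ * (X * X) * U := by
    calc _ = Uᴴ * X * (U * Uᴴ) * X * U := by simp only [Matrix.mul_assoc]
      _ = _ := by rw [hU, Matrix.mul_one]; simp only [Matrix.mul_assoc]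
  rw [norm_blochVec_sq_eq_trace hX,
    norm_blochVec_sq_eq_trace (isHermitian_conjTranspose_mul_mul U hX), hsq, trace_mul_cycle, hU,
    Matrix.one_mul, trace_mul_cycle, hU, Matrix.one_mul]

noncomputable def basisObservable (m : Fin 2 → Fin 2 → ℂ) : Matrix (Fin 2) (Fin 2) ℂ :=
  vecMulVec (m 0) (star (m 0)) - vecMulVec (m 1) (star (m 1))

noncomputable def basisAxis (m : Fin 2 → Fin 2 → ℂ) : EuclideanSpace ℝ (Fin 3) :=
  (2⁻¹ : ℝ) • blochVec (basisObservable m)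

lemma isHermitian_basisObservable (m : Fin 2 → Fin 2 → ℂ) :
    (basisObservable m).IsHermitian := by
  simp [basisObservable, IsHermitian, conjTranspose_sub, conjTranspose_vecMulVec]

lemma trace_mul_basisObservable (X : Matrix (Fin 2) (Fin 2) ℂ) (m : Fin 2 → Fin 2 → ℂ) :
    (X * basisObservable m).trace = star (m 0) ⬝ᵥ X *ᵥ m 0 - star (m 1) ⬝ᵥ X *ᵥ m 1 := by
  rw [basisObservable, Matrix.mul_sub, trace_sub, trace_mul_vecMulVec, trace_mul_vecMulVec]

lemma trace_basisObservable_mul_basisObservable (m m' : Fin 2 → Fin 2 → ℂ) :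
    (basisObservable m' * basisObservable m).trace =
      (star (m 0) ⬝ᵥ m' 0) * (star (m' 0) ⬝ᵥ m 0) - (star (m 0) ⬝ᵥ m' 1) * (star (m' 1) ⬝ᵥ m 0)
      - ((star (m 1) ⬝ᵥ m' 0) * (star (m' 0) ⬝ᵥ m 1)
        - (star (m 1) ⬝ᵥ m' 1) * (star (m' 1) ⬝ᵥ m 1)) := by
  rw [trace_mul_basisObservable]
  simp only [basisObservable, sub_mulVec, dotProduct_sub, dotProduct_vecMulVec_mulVec]

lemma ONB.trace_basisObservable {m : Fin 2 → Fin 2 → ℂ} (hm : ONB m) :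
    (basisObservable m).trace = 0 := by
  rw [basisObservable, trace_sub, trace_vecMulVec, trace_vecMulVec, dotProduct_comm, hm 0 0,
    dotProduct_comm, hm 1 1]
  simp

lemma ONB.inner_basisAxis {m m' : Fin 2 → Fin 2 → ℂ} (hm : ONB m) (hm' : ONB m') :
    ⟪basisAxis m, basisAxis m'⟫ = (basisObservable m * basisObservable m').trace.re / 2 := by
  rw [re_trace_mul_eq_inner_blochVec (isHermitian_basisObservable m)
    (isHermitian_basisObservable m'), hm.trace_basisObservable, hm'.trace_basisObservable,
    basisAxis, basisAxis, real_inner_smul_left, real_inner_smul_right]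
  simp only [Complex.zero_re, mul_zero, zero_add]
  ring

lemma MUBtriple.orthonormal_basisAxis {M : Fin 3 → Fin 2 → Fin 2 → ℂ} (hM : MUBtriple M) :
    Orthonormal ℝ fun i => basisAxis (M i) := by
  obtain ⟨hONB, hunbiased⟩ := hM
  rw [orthonormal_iff_ite]
  intro i j
  rw [(hONB i).inner_basisAxis (hONB j), trace_basisObservable_mul_basisObservable]
  split_ifs with hij
  · subst hij
    simp [hONB i 0 0, hONB i 0 1, hONB i 1 0, hONB i 1 1]
  · have hsq : ∀ a b, (star (M j a) ⬝ᵥ M i b) * (star (M i b) ⬝ᵥ M j a) = (1 / 2 : ℂ) := by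
      intro a b
      rw [star_dotProduct (M i b), RCLike.star_def, mul_comm, Complex.conj_mul',
        ← Complex.ofReal_pow, hunbiased j i (Ne.symm hij)]
      norm_num
    simp only [hsq]
    norm_num

def basisMatrix (m : Fin 2 → Fin 2 → ℂ) : Matrix (Fin 2) (Fin 2) ℂ :=
  (of m)ᵀ

lemma ONB.basisMatrix_mul_conjTranspose {m : Fin 2 → Fin 2 → ℂ} (hm : ONB m) :
    basisMatrix m * (basisMatrix m)ᴴ = 1 := by
  refine mul_eq_one_comm.mp (ext fun k l => ?_)
  simpa [basisMatrix, mul_apply, dotProduct, one_apply] using hm k l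

lemma conjTranspose_basisMatrix_mul_mul_apply (σ : Matrix (Fin 2) (Fin 2) ℂ)
    (m : Fin 2 → Fin 2 → ℂ) (k l : Fin 2) :
    ((basisMatrix m)ᴴ * σ * basisMatrix m) k l = star (m k) ⬝ᵥ σ *ᵥ m l := by
  simp [basisMatrix, mul_apply, dotProduct, mulVec]
  ring

lemma cohIn_eq_two_mul_norm {σ : Matrix (Fin 2) (Fin 2) ℂ} (hσ : σ.IsHermitian)
    (m : Fin 2 → Fin 2 → ℂ) : cohIn m σ = 2 * ‖star (m 0) ⬝ᵥ σ *ᵥ m 1‖ := by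
  have hswap : star (m 1) ⬝ᵥ σ *ᵥ m 0 = star (star (m 0) ⬝ᵥ σ *ᵥ m 1) := by
    rw [star_dotProduct, star_mulVec, ← dotProduct_mulVec, hσ.eq]
  simp only [cohIn, Fin.sum_univ_two, ne_eq, not_true_eq_false, zero_ne_one, one_ne_zero,
    not_false_eq_true, if_true, if_false, zero_add, add_zero, hswap, norm_star]
  ring

lemma ONB.cohIn_sq {m : Fin 2 → Fin 2 → ℂ} (hm : ONB m) {σ : Matrix (Fin 2) (Fin 2) ℂ}
    (hσ : σ.IsHermitian) :
    cohIn m σ ^ 2 = ‖blochVec σ‖ ^ 2 - ⟪basisAxis m, blochVec σ⟫ ^ 2 := by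
  set τ := (basisMatrix m)ᴴ * σ * basisMatrix m with hτ
  have hoff : cohIn m σ = 2 * ‖τ 0 1‖ := by
    rw [cohIn_eq_two_mul_norm hσ, hτ, conjTranspose_basisMatrix_mul_mul_apply]
  have hdiag : (τ 0 0).re - (τ 1 1).re = ⟪basisAxis m, blochVec σ⟫ := by
    rw [hτ, conjTranspose_basisMatrix_mul_mul_apply, conjTranspose_basisMatrix_mul_mul_apply,
      ← Complex.sub_re, ← trace_mul_basisObservable,
      re_trace_mul_eq_inner_blochVec hσ (isHermitian_basisObservable m),
      hm.trace_basisObservable, basisAxis, real_inner_smul_left, real_inner_comm]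
    simp only [Complex.zero_re, mul_zero, zero_add]
    ring
  have hnorm := norm_blochVec_sq τ
  rw [hτ, norm_blochVec_conjTranspose_mul_mul hm.basisMatrix_mul_conjTranspose hσ, ← hτ,
    hdiag] at hnorm
  rw [hoff, hnorm]
  ring

theorem MUBtriple.sum_cohIn_le_sqrt_six {M : Fin 3 → Fin 2 → Fin 2 → ℂ} (hM : MUBtriple M)
    {σ : Matrix (Fin 2) (Fin 2) ℂ} (hσ : σ.PosSemidef) (htr : σ.trace = 1) :
    ∑ i, cohIn (M i) σ ≤ √6 := by
  have hsq : ∑ i, cohIn (M i) σ ^ 2 = 2 * ‖blochVec σ‖ ^ 2 := by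
    simp only [(hM.1 _).cohIn_sq hσ.1, Finset.sum_sub_distrib,
      hM.orthonormal_basisAxis.sum_sq_inner_right_eq_norm_sq (by simp) (blochVec σ)]
    simp only [Finset.sum_const, Finset.card_univ, Fintype.card_fin, nsmul_eq_mul]
    ring
  apply Real.le_sqrt_of_sq_le
  calc (∑ i, cohIn (M i) σ) ^ 2 ≤ 3 * ∑ i, cohIn (M i) σ ^ 2 := by
        simpa using sq_sum_le_card_mul_sum_sq (s := Finset.univ) (f := fun i => cohIn (M i) σ)
    _ ≤ 6 := by rw [hsq]; linarith [norm_blochVec_sq_le_one hσ htr]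

lemma cohIn_sum_smul_le {ι : Type*} (s : Finset ι) (m : Fin 2 → Fin 2 → ℂ) {c : ι → ℝ}
    (hc : ∀ l ∈ s, 0 ≤ c l) (χ : ι → Matrix (Fin 2) (Fin 2) ℂ) :
    cohIn m (∑ l ∈ s, (c l : ℂ) • χ l) ≤ ∑ l ∈ s, c l * cohIn m (χ l) := by
  calc cohIn m (∑ l ∈ s, (c l : ℂ) • χ l)
      ≤ ∑ i, ∑ j, ∑ l ∈ s, c l * if i ≠ j then ‖star (m i) ⬝ᵥ χ l *ᵥ m j‖ else 0 := by
        unfold cohIn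
        gcongr with i _ j _
        split_ifs
        · simp only [Matrix.sum_mulVec, dotProduct_sum, smul_mulVec, dotProduct_smul]
          refine (norm_sum_le _ _).trans_eq (Finset.sum_congr rfl fun l hl => ?_)
          rw [norm_smul, Complex.norm_real, Real.norm_of_nonneg (hc l hl)]
        · simp
    _ = ∑ l ∈ s, c l * cohIn m (χ l) := by
        simp only [cohIn, Finset.mul_sum]
        symm
        rw [Finset.sum_comm]
        exact Finset.sum_congr rfl fun i _ => Finset.sum_comm

theorem non_steerable_no_naqc (ρ : Matrix (Fin 2 × Fin 2) (Fin 2 × Fin 2) ℂ)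
    (n : ℕ) (pl : Fin n → ℝ) (hpl : ∀ l, 0 ≤ pl l) (hplsum : ∑ l, pl l = 1)
    (σB : Fin n → Matrix (Fin 2) (Fin 2) ℂ)
    (hσB : ∀ l, (σB l).PosSemidef ∧ (σB l).trace = 1)
    (hLHS : ∀ m : Fin 2 → Fin 2 → ℂ, ONB m →
      ∃ q : Fin 2 → Fin n → ℝ, (∀ a l, 0 ≤ q a l) ∧ (∀ l, ∑ a, q a l = 1) ∧
        ∀ a, condB ρ (m a) = ∑ l, ((pl l * q a l : ℝ) : ℂ) • σB l) :
    ∀ M Λ, MUBtriple M → MUBtriple Λ → naqcSum ρ M Λ ≤ Real.sqrt 6 := by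
  intro M Λ hM hΛ
  choose q hq hqsum hcond using fun i => hLHS (Λ i) (hΛ.1 i)
  calc naqcSum ρ M Λ ≤ ∑ i, ∑ a, ∑ l, pl l * q i a l * cohIn (M i) (σB l) := by
        unfold naqcSum
        gcongr with i _ a _
        rw [hcond i a]
        exact cohIn_sum_smul_le _ _ (fun l _ => mul_nonneg (hpl l) (hq i a l)) σB
    _ = ∑ l, pl l * ∑ i, cohIn (M i) (σB l) := by
        have hmarginal : ∀ i l, ∑ a, pl l * q i a l * cohIn (M i) (σB l)
            = pl l * cohIn (M i) (σB l) := fun i l => by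
          rw [← Finset.sum_mul, ← Finset.mul_sum, hqsum i l, mul_one]
        rw [Finset.sum_congr rfl fun i _ => Finset.sum_comm]
        simp only [hmarginal, Finset.mul_sum]
        exact Finset.sum_comm
    _ ≤ ∑ l, pl l * √6 := by
        gcongr with l
        · exact hpl l
        · exact hM.sum_cohIn_le_sqrt_six (hσB l).1 (hσB l).2
    _ = √6 := by rw [← Finset.sum_mul, hplsum, one_mul]
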